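/- Let E be a real vector space, ι a finite index set, and α : ι → (E →ₗ[ℝ] ℝ) a family of linear functionals on E. Then the function Y ↦ ∑_{i ∈ ι} log( sinh(αᵢ(Y)) / αᵢ(Y) ) is convex on all of E (with the summand understood as 0 whenever αᵢ(Y) = 0, which is the continuous extension value). -/

import Mathlib

/-!
The summands are `log (sinh t / t)` composed with linear functionals, so it suffices that
`g t = log (sinh t / t)` is convex on `ℝ`. For `t > 0` one has
`g'' t = 1 / t ^ 2 - 1 / sinh t ^ 2 ≥ 0` because `sinh t ≥ t`, so `g` is convex on `[0, ∞)`;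
there `g ≥ 0 = g 0`, which together with convexity makes `g` nondecreasing. Since `g` is even,
`g = g ∘ |·|` is a nondecreasing convex function of the convex function `|·|`, hence convex.
-/

open Real Set Filter Topology

section Convexity

variable {𝕜 E β ι : Type*}

theorem ConvexOn.sum [Semiring 𝕜] [PartialOrder 𝕜] [AddCommMonoid E] [SMul 𝕜 E]
    [AddCommMonoid β] [PartialOrder β] [IsOrderedAddMonoid β] [Module 𝕜 β]
    {s : Set E} (hs : Convex 𝕜 s) (t : Finset ι) {f : ι → E → β}
    (hf : ∀ i ∈ t, ConvexOn 𝕜 s (f i)) : ConvexOn 𝕜 s fun x => ∑ i ∈ t, f i x := by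
  rw [← Finset.sum_fn]
  exact Finset.sum_induction f (ConvexOn 𝕜 s) (fun _ _ => ConvexOn.add) (convexOn_const 0 hs) hf

theorem ConvexOn.monotoneOn_of_isMinOn [Field 𝕜] [LinearOrder 𝕜] [IsStrictOrderedRing 𝕜]
    [AddCommMonoid β] [LinearOrder β] [IsOrderedCancelAddMonoid β] [Module 𝕜 β]
    [PosSMulStrictMono 𝕜 β] {f : 𝕜 → β} {a : 𝕜} (hf : ConvexOn 𝕜 (Ici a) f)
    (hmin : IsMinOn f (Ici a) a) : MonotoneOn f (Ici a) := by
  intro y hy z hz hyz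
  rcases (mem_Ici.1 hy).eq_or_lt with rfl | hay
  · exact hmin hz
  · exact hf.le_right_of_left_le'' self_mem_Ici hz hay hyz (hmin hy)

theorem convexOn_univ_of_even_of_monotoneOn_Ici [AddCommMonoid β] [PartialOrder β]
    [IsOrderedAddMonoid β] [Module ℝ β] {f : ℝ → β} (heven : ∀ t, f (-t) = f t)
    (hf : ConvexOn ℝ (Ici 0) f) (hmono : MonotoneOn f (Ici 0)) : ConvexOn ℝ univ f := by
  have hf_abs : f ∘ abs = f := by
    ext t
    rcases abs_choice t with h | h <;> simp [h, heven]
  have himage : abs '' univ = Ici (0 : ℝ) := by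
    ext y
    exact ⟨by rintro ⟨t, -, rfl⟩; exact abs_nonneg t, fun hy => ⟨y, trivial, abs_of_nonneg hy⟩⟩
  rw [← hf_abs]
  rw [← himage] at hf hmono
  exact hf.comp convexOn_univ_norm hmono

end Convexity

noncomputable def logSinhDiv (t : ℝ) : ℝ := log (sinh t / t)

theorem logSinhDiv_neg (t : ℝ) : logSinhDiv (-t) = logSinhDiv t := by
  simp only [logSinhDiv, sinh_neg, neg_div_neg_eq]

theorem logSinhDiv_zero : logSinhDiv 0 = 0 := by
  simp [logSinhDiv]

theorem logSinhDiv_nonneg {t : ℝ} (ht : 0 ≤ t) : 0 ≤ logSinhDiv t := by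
  rcases ht.eq_or_lt with rfl | ht
  · exact logSinhDiv_zero.ge
  · exact log_nonneg ((one_le_div ht).2 (self_le_sinh_iff.2 ht.le))

theorem tendsto_sinh_div_self : Tendsto (fun t => sinh t / t) (𝓝[≠] 0) (𝓝 1) := by
  simpa [div_eq_inv_mul] using (hasDerivAt_sinh 0).tendsto_slope_zero

theorem continuous_logSinhDiv : Continuous logSinhDiv := by
  rw [continuous_iff_continuousAt]
  intro x
  rcases eq_or_ne x 0 with rfl | hx
  · rw [← continuousWithinAt_compl_self, ContinuousWithinAt, logSinhDiv_zero]
    have hlog := (continuousAt_log one_ne_zero).tendsto.comp tendsto_sinh_div_self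
    rw [log_one] at hlog
    exact hlog
  · exact (continuous_sinh.continuousAt.div continuousAt_id hx).log
      (div_ne_zero (sinh_ne_zero.2 hx) hx)

theorem hasDerivAt_logSinhDiv {x : ℝ} (hx : 0 < x) :
    HasDerivAt logSinhDiv (cosh x / sinh x - x⁻¹) x := by
  have hsinh : 0 < sinh x := sinh_pos_iff.2 hx
  refine (((hasDerivAt_sinh x).div (hasDerivAt_id x) hx.ne').log
    (div_pos hsinh hx).ne').congr_deriv ?_
  simp only [Pi.div_apply, id, mul_one]
  field_simp

theorem hasDerivAt_coth_sub_inv {x : ℝ} (hx : 0 < x) :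
    HasDerivAt (fun t => cosh t / sinh t - t⁻¹) ((x ^ 2)⁻¹ - (sinh x ^ 2)⁻¹) x := by
  have hsinh : sinh x ≠ 0 := (sinh_pos_iff.2 hx).ne'
  refine (((hasDerivAt_cosh x).div (hasDerivAt_sinh x) hsinh).sub
    (hasDerivAt_inv hx.ne')).congr_deriv ?_
  field_simp
  linear_combination (-x ^ 2) * cosh_sq_sub_sinh_sq x

theorem inv_sq_sub_inv_sinh_sq_nonneg {x : ℝ} (hx : 0 < x) : 0 ≤ (x ^ 2)⁻¹ - (sinh x ^ 2)⁻¹ := by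
  rw [sub_nonneg]
  gcongr
  exact self_le_sinh_iff.2 hx.le

theorem convexOn_logSinhDiv_Ici : ConvexOn ℝ (Ici 0) logSinhDiv := by
  refine convexOn_of_hasDerivWithinAt2_nonneg (f' := fun t => cosh t / sinh t - t⁻¹)
    (f'' := fun t => (t ^ 2)⁻¹ - (sinh t ^ 2)⁻¹) (convex_Ici 0)
    continuous_logSinhDiv.continuousOn (fun x hx => ?_) (fun x hx => ?_) (fun x hx => ?_) <;>
    rw [interior_Ici] at hx
  · exact (hasDerivAt_logSinhDiv hx).hasDerivWithinAt
  · exact (hasDerivAt_coth_sub_inv hx).hasDerivWithinAt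
  · exact inv_sq_sub_inv_sinh_sq_nonneg hx

theorem convexOn_logSinhDiv : ConvexOn ℝ univ logSinhDiv :=
  convexOn_univ_of_even_of_monotoneOn_Ici logSinhDiv_neg convexOn_logSinhDiv_Ici
    (convexOn_logSinhDiv_Ici.monotoneOn_of_isMinOn (isMinOn_iff.2 fun _ ht =>
      logSinhDiv_zero.trans_le (logSinhDiv_nonneg ht)))

/-- For any finite family `α i` of linear functionals on a real vector space `E`, the
function `Y ↦ ∑ i, log (sinh (α i Y) / α i Y)` is convex on all of `E` (where each summand
takes the value `0` when `α i Y = 0`, by Lean's conventions `0/0 = 0` and `log 0 = 0`). -/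
theorem sum_log_sinh_div_roots_convexOn (E : Type*) [AddCommGroup E] [Module ℝ E]
    (ι : Type*) [Fintype ι] (α : ι → (E →ₗ[ℝ] ℝ)) :
    ConvexOn ℝ Set.univ
      (fun Y : E => ∑ i : ι, Real.log (Real.sinh (α i Y) / (α i Y))) :=
  ConvexOn.sum convex_univ Finset.univ fun i _ => convexOn_logSinhDiv.comp_linearMap (α i)
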